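/- arXiv:1509.08580 — 4 statements merged into one kernel-verified Lean document; each statement's English description precedes it below -/
import Mathlib

section
/- For any letters a, b with a ≠ b and any word w of length n, we have ∂_b(sh_a(w)) - sh_a(∂_b(w)) = Θ_{b,a}(w), and for a = b, ∂_a(sh_a(w)) - sh_a(∂_a(w)) = Θ_{a,a}(w) + (n+1)w. In both cases: ∂_b ∘ sh_a - sh_a ∘ ∂_b = Θ_{b,a} + δ_{a,b}(n+1)·id on words of length n. -/
open Finsupp

variable {A : Type} [DecidableEq A]

/-- The formal sum of `Finsupp.single w 1` over a list of words. -/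
noncomputable def wordSum (l : List (List A)) : List A →₀ ℂ :=
  (l.map fun w => Finsupp.single w (1 : ℂ)).sum

/-- All words obtained from `w` by inserting the letter `a` at one position. -/
def insertions (a : A) : List A → List (List A)
  | [] => [[a]]
  | b :: t => (a :: b :: t) :: (insertions a t).map (b :: ·)

/-- All words obtained from `w` by deleting one occurrence of the letter `a`. -/
def deletions (a : A) : List A → List (List A)
  | [] => []
  | b :: t => (if b = a then [t] else []) ++ (deletions a t).map (b :: ·)

/-- All words obtained from `w` by replacing one occurrence of `b` by `a`. -/
def replacements (b a : A) : List A → List (List A)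
  | [] => []
  | c :: t => (if c = b then [a :: t] else []) ++ (replacements b a t).map (c :: ·)

/-- The insertion operator `sh_a`. -/
noncomputable def shOp (a : A) : (List A →₀ ℂ) →ₗ[ℂ] (List A →₀ ℂ) :=
  Finsupp.linearCombination ℂ (fun w => wordSum (insertions a w))

/-- The deletion operator `∂_a`. -/
noncomputable def delOp (a : A) : (List A →₀ ℂ) →ₗ[ℂ] (List A →₀ ℂ) :=
  Finsupp.linearCombination ℂ (fun w => wordSum (deletions a w))

/-- The replacement operator `Θ_{b,a}`. -/
noncomputable def repOp (b a : A) : (List A →₀ ℂ) →ₗ[ℂ] (List A →₀ ℂ) :=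
  Finsupp.linearCombination ℂ (fun w => wordSum (replacements b a w))

/-- Remove the letter at position `i` of `w` and reinsert it at position `j` (0-based). -/
def moveCard (w : List A) (i j : ℕ) : List A :=
  match w[i]? with
  | Option.none => w
  | Option.some c => (w.eraseIdx i).insertIdx j c

/-- The random-to-random operator applied to a single word: the sum over all ordered
pairs of positions `(i, j)` of removing the letter at position `i` and reinserting it
at position `j` (the diagonal `i = j` contributes `w.length • w`). -/
noncomputable def r2rWord (w : List A) : List A →₀ ℂ :=
  ∑ i ∈ Finset.range w.length, ∑ j ∈ Finset.range w.length,
    Finsupp.single (moveCard w i j) (1 : ℂ)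

/-- The (unnormalized) random-to-random operator `R2R`. -/
noncomputable def r2rOp : (List A →₀ ℂ) →ₗ[ℂ] (List A →₀ ℂ) :=
  Finsupp.linearCombination ℂ r2rWord

/-- Random-to-top on a single word: move the letter at each position to the end. -/
noncomputable def r2tWord (w : List A) : List A →₀ ℂ :=
  ∑ i ∈ Finset.range w.length, Finsupp.single (moveCard w i (w.length - 1)) (1 : ℂ)

/-- The (unnormalized) random-to-top operator `R2T`. -/
noncomputable def r2tOp : (List A →₀ ℂ) →ₗ[ℂ] (List A →₀ ℂ) :=
  Finsupp.linearCombination ℂ r2tWord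

/-- Top-to-random on a single word: move the last letter to each position. -/
noncomputable def t2rWord (w : List A) : List A →₀ ℂ :=
  ∑ j ∈ Finset.range w.length, Finsupp.single (moveCard w (w.length - 1) j) (1 : ℂ)

/-- The (unnormalized) top-to-random operator `T2R`. -/
noncomputable def t2rOp : (List A →₀ ℂ) →ₗ[ℂ] (List A →₀ ℂ) :=
  Finsupp.linearCombination ℂ t2rWord

/-! Induction on the word. Prefixing by a letter `c` commutes with `sh_a`, `∂_b` and `Θ_{b,a}`
up to one correction term each. Expanding `∂_b (sh_a (c w))` and `sh_a (∂_b (c w))` this way, the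
only new terms without a counterpart are deleting the `a` inserted in front of `c` (possible only
if `a = b`) and deleting a leading `c = b` after inserting `a` in front of it, which is replacing
that `c` by `a`. -/

section

omit [DecidableEq A]

noncomputable def prepend (c : A) : (List A →₀ ℂ) →ₗ[ℂ] (List A →₀ ℂ) :=
  lmapDomain ℂ ℂ (List.cons c)

@[simp]
lemma prepend_single (c : A) (w : List A) (r : ℂ) :
    prepend c (single w r) = single (c :: w) r :=
  mapDomain_single

lemma wordSum_cons (u : List A) (l : List (List A)) :
    wordSum (u :: l) = single u 1 + wordSum l := by
  simp [wordSum]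

lemma wordSum_append (l₁ l₂ : List (List A)) :
    wordSum (l₁ ++ l₂) = wordSum l₁ + wordSum l₂ := by
  simp [wordSum]

lemma wordSum_ite_singleton (p : Prop) [Decidable p] (u : List A) :
    wordSum (if p then [u] else []) = if p then single u 1 else 0 := by
  split_ifs <;> simp [wordSum]

lemma wordSum_map_cons (c : A) (l : List (List A)) :
    wordSum (l.map (c :: ·)) = prepend c (wordSum l) := by
  induction l with
  | nil => simp [wordSum]
  | cons u l ih => simp [wordSum_cons, ih]

lemma shOp_single (a : A) (w : List A) :
    shOp a (single w 1) = wordSum (insertions a w) := by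
  simp [shOp]

lemma shOp_single_nil (a : A) : shOp a (single [] 1) = prepend a (single [] 1) := by
  simp [shOp_single, insertions, wordSum]

lemma shOp_prepend (a c : A) (x : List A →₀ ℂ) :
    shOp a (prepend c x) = prepend a (prepend c x) + prepend c (shOp a x) := by
  suffices h : shOp a ∘ₗ prepend c = prepend a ∘ₗ prepend c + prepend c ∘ₗ shOp a from
    LinearMap.congr_fun h x
  refine lhom_ext' fun w => LinearMap.ext_ring ?_
  simp [shOp_single, insertions, wordSum_cons, wordSum_map_cons]

end

lemma delOp_single (b : A) (w : List A) :
    delOp b (single w 1) = wordSum (deletions b w) := by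
  simp [delOp]

lemma repOp_single (b a : A) (w : List A) :
    repOp b a (single w 1) = wordSum (replacements b a w) := by
  simp [repOp]

@[simp]
lemma delOp_single_nil (b : A) : delOp b (single ([] : List A) 1) = 0 := by
  simp [delOp_single, deletions, wordSum]

@[simp]
lemma repOp_single_nil (b a : A) : repOp b a (single ([] : List A) 1) = 0 := by
  simp [repOp_single, replacements, wordSum]

lemma delOp_prepend (b c : A) (x : List A →₀ ℂ) :
    delOp b (prepend c x) = (if c = b then x else 0) + prepend c (delOp b x) := by
  suffices h : delOp b ∘ₗ prepend c =
      (if c = b then LinearMap.id else 0) + prepend c ∘ₗ delOp b by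
    split_ifs at h ⊢ <;> simpa using LinearMap.congr_fun h x
  refine lhom_ext' fun w => LinearMap.ext_ring ?_
  simp only [LinearMap.comp_apply, lsingle_apply, LinearMap.add_apply, prepend_single,
    delOp_single, deletions, wordSum_append, wordSum_ite_singleton, wordSum_map_cons]
  split_ifs <;> simp

lemma repOp_prepend (b a c : A) (x : List A →₀ ℂ) :
    repOp b a (prepend c x) = (if c = b then prepend a x else 0) + prepend c (repOp b a x) := by
  suffices h : repOp b a ∘ₗ prepend c =
      (if c = b then prepend a else 0) + prepend c ∘ₗ repOp b a by
    split_ifs at h ⊢ <;> simpa using LinearMap.congr_fun h x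
  refine lhom_ext' fun w => LinearMap.ext_ring ?_
  simp only [LinearMap.comp_apply, lsingle_apply, LinearMap.add_apply, prepend_single,
    repOp_single, replacements, wordSum_append, wordSum_ite_singleton, wordSum_map_cons]
  split_ifs <;> simp

lemma delOp_shOp_single (a b : A) (w : List A) :
    delOp b (shOp a (single w 1)) = shOp a (delOp b (single w 1)) +
      repOp b a (single w 1) + (if a = b then (w.length + 1 : ℂ) else 0) • single w 1 := by
  induction w with
  | nil =>
    rw [shOp_single_nil, delOp_prepend]
    split_ifs <;> simp
  | cons c t ih =>
    rw [← prepend_single]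
    simp only [shOp_prepend, delOp_prepend, repOp_prepend, ih, map_add, map_smul,
      apply_ite (shOp a), apply_ite (prepend a), map_zero, List.length_cons]
    split_ifs <;> push_cast <;> module

/-- **Lemma 36, Equation (13).** On words of length `n`,
`∂_b ∘ sh_a - sh_a ∘ ∂_b = Θ_{b,a} + δ_{a,b} (n+1) id`. -/
theorem del_comp_sh_sub_sh_comp_del (a b : A) (n : ℕ) (w : List A) (hw : w.length = n) :
    delOp b (shOp a (Finsupp.single w (1 : ℂ))) -
      shOp a (delOp b (Finsupp.single w (1 : ℂ))) =
    repOp b a (Finsupp.single w (1 : ℂ)) +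
      (if a = b then ((n : ℂ) + 1) else 0) • Finsupp.single w (1 : ℂ) := by
  rw [delOp_shOp_single, ← hw]
  abel
end

section
/- The random-to-random operator factors as R2R_n = Σ_{a ∈ A} sh_a ∘ ∂_a, where the sum is over all letters of the alphabet, as linear operators on the span of words of length n. -/
open Finsupp

variable {A : Type} [DecidableEq A]

/-!
Both sides are sums over the positions `i` of `w`. Moving the letter `w[i]` to each of the
positions `j` is inserting it at each position of `w.eraseIdx i`, so `R2R w` is the sum over `i`
of `sh_{w[i]} (w.eraseIdx i)`. On the other side, deleting an occurrence of some letter `a` is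
deleting the letter at some position `i`, and then `a = w[i]`.
-/

lemma sum_deletions_eq_sum_eraseIdx {α M : Type} [DecidableEq α] [Fintype α] [AddCommMonoid M]
    (g : α → List α → M) (t : List α) :
    ∑ a : α, ((deletions a t).map (g a)).sum = ∑ i : Fin t.length, g t[i] (t.eraseIdx i) := by
  induction t generalizing g with
  | nil => simp [deletions]
  | cons b s ih =>
    simp only [deletions, List.map_append, List.sum_append, List.map_map, Function.comp_def,
      Finset.sum_add_distrib, List.length_cons, Fin.sum_univ_succ]
    rw [ih fun a d => g a (b :: d)]
    congr 1
    rw [Finset.sum_eq_single b] <;> simp +contextual [eq_comm]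

lemma insertions_eq_map_range {α : Type} (c : α) (v : List α) :
    insertions c v = (List.range (v.length + 1)).map (v.insertIdx · c) := by
  induction v with
  | nil => simp [insertions, List.range_succ]
  | cons b u ih =>
    rw [insertions, ih, List.length_cons, List.range_succ_eq_map (n := u.length + 1)]
    simp [List.map_map, Function.comp_def, List.insertIdx_succ_cons]

lemma wordSum_insertions {α : Type} (c : α) (v : List α) :
    wordSum (insertions c v) =
      ∑ j ∈ Finset.range (v.length + 1), Finsupp.single (v.insertIdx j c) (1 : ℂ) := by
  rw [insertions_eq_map_range, wordSum, List.map_map, Finset.sum_eq_multiset_sum,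
    Finset.range_val, Multiset.range, Multiset.map_coe, Multiset.sum_coe]
  rfl

lemma r2rWord_eq_sum_wordSum_insertions {α : Type} (w : List α) :
    r2rWord w = ∑ i : Fin w.length, wordSum (insertions w[i] (w.eraseIdx i)) := by
  rw [r2rWord, ← Fin.sum_univ_eq_sum_range]
  refine Finset.sum_congr rfl fun i _ => ?_
  rw [wordSum_insertions, List.length_eraseIdx_add_one i.isLt]
  refine Finset.sum_congr rfl fun j _ => ?_
  rw [moveCard, List.getElem?_eq_getElem i.isLt]
  rfl

lemma shOp_wordSum {α : Type} (a : α) (l : List (List α)) :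
    shOp a (wordSum l) = (l.map fun d => wordSum (insertions a d)).sum := by
  simp [wordSum, map_list_sum, List.map_map, Function.comp_def, shOp]

theorem r2r_eq_sum_sh_comp_del_general [Fintype A] (w : List A) :
    r2rOp (Finsupp.single w (1 : ℂ)) =
      ∑ a : A, shOp a (delOp a (Finsupp.single w (1 : ℂ))) := by
  calc r2rOp (Finsupp.single w (1 : ℂ))
      = ∑ i : Fin w.length, wordSum (insertions w[i] (w.eraseIdx i)) := by
        rw [r2rOp, linearCombination_single, one_smul, r2rWord_eq_sum_wordSum_insertions]
    _ = ∑ a : A, ((deletions a w).map fun d => wordSum (insertions a d)).sum :=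
        (sum_deletions_eq_sum_eraseIdx (fun a d => wordSum (insertions a d)) w).symm
    _ = ∑ a : A, shOp a (delOp a (Finsupp.single w (1 : ℂ))) := by
        simp only [delOp, linearCombination_single, one_smul, shOp_wordSum]

/-- **Proposition 35(3), first equality.** The random-to-random operator factors as
`R2R_n = ∑_{a ∈ A} sh_a ∘ ∂_a` on words of length `n`. -/
theorem r2r_eq_sum_sh_comp_del [Fintype A] (n : ℕ) (w : List A) (hw : w.length = n) :
    r2rOp (Finsupp.single w (1 : ℂ)) =
      ∑ a : A, shOp a (delOp a (Finsupp.single w (1 : ℂ))) :=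
  r2r_eq_sum_sh_comp_del_general w
end

section
/- For letters a_1, ..., a_k and a letter a distinct from all a_i, and any word w not containing a: (sh_{a_k} ∘ ⋯ ∘ sh_{a_1})(w) equals the shuffle product w ⧢ a_1 ⧢ a_2 ⧢ ⋯ ⧢ a_k, which also equals (Θ_{a,a_k} ∘ ⋯ ∘ Θ_{a,a_1})(w ⧢ a^k) where a^k is the word consisting of k copies of a. -/
/-!
The operator `sh_b` is right shuffle by the one-letter word `b`, which gives the first equality.
The second rests on the identity `Θ_{a,b}(u ⧢ a^(k+1)) = (u ⧢ b) ⧢ a^k` for a word `u` without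
`a`, proved by induction on `u` and `k` from the recursion `cu ⧢ dv = c(u ⧢ dv) + d(cu ⧢ v)`.
As `b ≠ a`, the words of `u ⧢ b` again avoid `a`, so the identity can be applied once per letter
of `a₁ ⋯ a_k`, each time consuming one of the letters `a`.
-/

open Finsupp

variable {A : Type} [DecidableEq A]

/-- The list of all shuffles (interleavings) of two words; `wordSum (shuffles w u)` is
the shuffle product `w ⧢ u`. -/
def shuffles : List A → List A → List (List A)
  | [], u => [u]
  | a :: w, [] => [a :: w]
  | a :: w, b :: u =>
      ((shuffles w (b :: u)).map (a :: ·)) ++ ((shuffles (a :: w) u).map (b :: ·))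
  termination_by w u => w.length + u.length


section Shuffles

variable {α : Type}

@[simp]
theorem shuffles_nil_left (v : List α) : shuffles [] v = [v] := by
  simp [shuffles]

@[simp]
theorem shuffles_nil_right (u : List α) : shuffles u [] = [u] := by
  cases u <;> simp [shuffles]

theorem shuffles_cons_cons (c d : α) (u v : List α) :
    shuffles (c :: u) (d :: v) =
      (shuffles u (d :: v)).map (c :: ·) ++ (shuffles (c :: u) v).map (d :: ·) := by
  simp [shuffles]

theorem perm_append_of_mem_shuffles {u v x : List α} (hx : x ∈ shuffles u v) :
    x.Perm (u ++ v) := by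
  induction u, v using shuffles.induct generalizing x with
  | case1 v => simp_all
  | case2 c u => simp_all
  | case3 c u d v ihu ihv =>
    rw [shuffles_cons_cons] at hx
    simp only [List.mem_append, List.mem_map] at hx
    rcases hx with ⟨y, hy, rfl⟩ | ⟨y, hy, rfl⟩
    · exact (ihu hy).cons c
    · exact ((ihv hy).cons d).trans List.perm_middle.symm

theorem notMem_of_mem_shuffles {a : α} {u v x : List α} (hu : a ∉ u) (hv : a ∉ v)
    (hx : x ∈ shuffles u v) : a ∉ x := by
  rw [(perm_append_of_mem_shuffles hx).mem_iff, List.mem_append]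
  tauto

end Shuffles

section WordSum

variable {α : Type}

@[simp]
theorem wordSum_nil : wordSum ([] : List (List α)) = 0 := rfl

@[simp]
theorem wordSum_cons_s10 (u : List α) (L : List (List α)) :
    wordSum (u :: L) = Finsupp.single u 1 + wordSum L := by
  simp [wordSum]

@[simp]
theorem wordSum_append_s10 (L M : List (List α)) :
    wordSum (L ++ M) = wordSum L + wordSum M := by
  simp [wordSum]

noncomputable def consOp (c : α) : (List α →₀ ℂ) →ₗ[ℂ] (List α →₀ ℂ) :=
  Finsupp.lmapDomain ℂ ℂ (c :: ·)

@[simp]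
theorem consOp_single (c : α) (u : List α) (r : ℂ) :
    consOp c (Finsupp.single u r) = Finsupp.single (c :: u) r := by
  simp [consOp]

@[simp]
theorem wordSum_map_cons_s10 (c : α) (L : List (List α)) :
    wordSum (L.map (c :: ·)) = consOp c (wordSum L) := by
  induction L with
  | nil => simp
  | cons u L ih => simp [ih]

/-- `x ↦ x ⧢ v` -/
noncomputable def shuffleOp (v : List α) : (List α →₀ ℂ) →ₗ[ℂ] (List α →₀ ℂ) :=
  Finsupp.linearCombination ℂ fun u => wordSum (shuffles u v)

@[simp]
theorem shuffleOp_single (v u : List α) (r : ℂ) :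
    shuffleOp v (Finsupp.single u r) = r • wordSum (shuffles u v) := by
  simp [shuffleOp]

theorem shuffleOp_wordSum (v : List α) (L : List (List α)) :
    shuffleOp v (wordSum L) = wordSum (L.flatMap fun u => shuffles u v) := by
  induction L with
  | nil => simp
  | cons u L ih => simp [ih]

@[simp]
theorem shuffleOp_nil_apply (x : List α →₀ ℂ) : shuffleOp [] x = x := by
  induction x using Finsupp.induction_linear with
  | zero => simp
  | add x y hx hy => simp [hx, hy]
  | single u r => simp

theorem shuffleOp_single_nil (v : List α) :
    shuffleOp v (Finsupp.single [] 1) = Finsupp.single v 1 := by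
  simp

theorem shuffleOp_cons_consOp (c d : α) (v : List α) (x : List α →₀ ℂ) :
    shuffleOp (d :: v) (consOp c x) =
      consOp c (shuffleOp (d :: v) x) + consOp d (shuffleOp v (consOp c x)) := by
  induction x using Finsupp.induction_linear with
  | zero => simp
  | add x y hx hy => simp only [map_add, hx, hy]; abel
  | single u r => simp [shuffles_cons_cons, smul_add]

theorem wordSum_insertions_s10 (b : α) (u : List α) :
    wordSum (insertions b u) = wordSum (shuffles u [b]) := by
  induction u with
  | nil => simp [insertions]
  | cons c u ih =>
    simp only [insertions, shuffles_cons_cons, shuffles_nil_right, wordSum_cons_s10,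
      wordSum_append_s10, wordSum_map_cons_s10, ih, List.map_cons, List.map_nil, wordSum_nil]
    abel

theorem shOp_eq_shuffleOp (b : α) : shOp b = shuffleOp [b] := by
  ext u : 2
  simp [shOp, shuffleOp, wordSum_insertions_s10]

theorem foldl_shOp_wordSum (as : List α) (L : List (List α)) :
    as.foldl (fun v b => shOp b v) (wordSum L) =
      wordSum (as.foldl (fun M b => M.flatMap fun u => shuffles u [b]) L) := by
  induction as generalizing L with
  | nil => rfl
  | cons b as ih =>
    rw [List.foldl_cons, List.foldl_cons, shOp_eq_shuffleOp, shuffleOp_wordSum, ih]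

end WordSum

theorem repOp_consOp (a b c : A) (x : List A →₀ ℂ) :
    repOp a b (consOp c x) = (if c = a then consOp b x else 0) + consOp c (repOp a b x) := by
  induction x using Finsupp.induction_linear with
  | zero => simp
  | add x y hx hy =>
    simp only [map_add, hx, hy]
    split <;> abel
  | single u r =>
    simp only [repOp, consOp_single, linearCombination_single, replacements, wordSum_append_s10,
      wordSum_map_cons_s10, smul_add, map_smul, add_left_inj]
    split <;> simp

theorem repOp_single_of_notMem {a : A} (b : A) {u : List A} (hu : a ∉ u) (r : ℂ) :
    repOp a b (Finsupp.single u r) = 0 := by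
  induction u generalizing r with
  | nil => simp [repOp, replacements]
  | cons c u ih =>
    rw [List.mem_cons, not_or] at hu
    rw [← consOp_single, repOp_consOp, if_neg (Ne.symm hu.1), ih hu.2]
    simp

theorem repOp_single_replicate (a b : A) (k : ℕ) :
    repOp a b (Finsupp.single (List.replicate (k + 1) a) 1) =
      shuffleOp (List.replicate k a) (Finsupp.single [b] 1) := by
  induction k with
  | zero => simp [repOp, replacements]
  | succ k ih =>
    rw [List.replicate_succ, ← consOp_single, repOp_consOp, if_pos rfl, ih,
      ← consOp_single b, List.replicate_succ, shuffleOp_cons_consOp, ← List.replicate_succ,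
      shuffleOp_single_nil, consOp_single, add_comm]

theorem repOp_shuffleOp_replicate (a b : A) {u : List A} (hu : a ∉ u) (k : ℕ) :
    repOp a b (shuffleOp (List.replicate (k + 1) a) (Finsupp.single u 1)) =
      shuffleOp (List.replicate k a) (shuffleOp [b] (Finsupp.single u 1)) := by
  induction u generalizing k with
  | nil => simp only [shuffleOp_single_nil, repOp_single_replicate]
  | cons c w ihw =>
    rw [List.mem_cons, not_or] at hu
    have hcw : repOp a b (consOp c (Finsupp.single w 1)) = 0 := by
      rw [consOp_single, repOp_single_of_notMem b (List.not_mem_cons_of_ne_of_not_mem hu.1 hu.2)]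
    specialize ihw hu.2
    rw [← consOp_single]
    generalize Finsupp.single w (1 : ℂ) = x at ihw hcw ⊢
    simp only [List.replicate_succ] at ihw ⊢
    have hb : shuffleOp [b] (consOp c x) = consOp c (shuffleOp [b] x) + consOp b (consOp c x) := by
      rw [shuffleOp_cons_consOp, shuffleOp_nil_apply]
    -- A word of `(c :: w) ⧢ a^(k+1)` starts with `c` or with an `a`, and `Θ_{a,b}` either turns
    -- that leading `a` into `b` or acts on the rest of the word.
    have expand : ∀ k, repOp a b (shuffleOp (a :: List.replicate k a) (consOp c x)) =
        consOp c (shuffleOp (List.replicate k a) (shuffleOp [b] x)) +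
          (consOp b (shuffleOp (List.replicate k a) (consOp c x)) +
            consOp a (repOp a b (shuffleOp (List.replicate k a) (consOp c x)))) := fun k => by
      rw [shuffleOp_cons_consOp, map_add, repOp_consOp, repOp_consOp, if_neg (Ne.symm hu.1),
        if_pos rfl, ihw, zero_add]
    induction k with
    | zero =>
      rw [expand]
      simp only [List.replicate_zero, shuffleOp_nil_apply, hcw, hb, map_zero, add_zero]
    | succ j ihk =>
      rw [expand, List.replicate_succ, ihk, hb]
      simp only [map_add, shuffleOp_cons_consOp]
      abel

theorem repOp_shuffleOp_replicate_wordSum (a b : A) {L : List (List A)} (hL : ∀ u ∈ L, a ∉ u)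
    (k : ℕ) :
    repOp a b (shuffleOp (List.replicate (k + 1) a) (wordSum L)) =
      shuffleOp (List.replicate k a) (shuffleOp [b] (wordSum L)) := by
  induction L with
  | nil => simp
  | cons u L ih =>
    simp only [List.forall_mem_cons] at hL
    simp only [wordSum_cons_s10, map_add, repOp_shuffleOp_replicate a b hL.1, ih hL.2]

theorem foldl_repOp_shuffleOp_replicate {a : A} {as : List A} (ha : ∀ x ∈ as, x ≠ a)
    {L : List (List A)} (hL : ∀ u ∈ L, a ∉ u) :
    as.foldl (fun v b => repOp a b v) (shuffleOp (List.replicate as.length a) (wordSum L)) =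
      as.foldl (fun v b => shOp b v) (wordSum L) := by
  induction as generalizing L with
  | nil => simp
  | cons b as ih =>
    simp only [List.forall_mem_cons] at ha
    have hL' : ∀ x ∈ L.flatMap fun u => shuffles u [b], a ∉ x := by
      simp only [List.mem_flatMap]
      rintro x ⟨u, hu, hx⟩
      exact notMem_of_mem_shuffles (hL u hu) (by simpa using ha.1.symm) hx
    rw [List.foldl_cons, List.foldl_cons, List.length_cons,
      repOp_shuffleOp_replicate_wordSum a b hL, shOp_eq_shuffleOp, shuffleOp_wordSum, ih ha.2 hL']

/-- **Lemma 54.** For letters `a₁, …, a_k` and a letter `a` distinct from all of them,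
and a word `w` not containing `a`:
`(sh_{a_k} ∘ ⋯ ∘ sh_{a_1})(w) = w ⧢ a₁ ⧢ ⋯ ⧢ a_k
  = (Θ_{a,a_k} ∘ ⋯ ∘ Θ_{a,a_1})(w ⧢ a^k)`. -/
theorem sh_iterate_eq_shuffle_eq_rep_iterate (a : A) (as : List A)
    (ha : ∀ x ∈ as, x ≠ a) (w : List A) (hw : a ∉ w) :
    as.foldl (fun v b => shOp b v) (Finsupp.single w (1 : ℂ)) =
      wordSum (as.foldl (fun L b => L.flatMap (fun u => shuffles u [b])) [w]) ∧
    as.foldl (fun v b => shOp b v) (Finsupp.single w (1 : ℂ)) =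
      as.foldl (fun v b => repOp a b v)
        (wordSum (shuffles w (List.replicate as.length a))) := by
  have hsingle : Finsupp.single w (1 : ℂ) = wordSum [w] := by simp
  have hrep := foldl_repOp_shuffleOp_replicate ha (L := [w]) (by simpa using hw)
  rw [shuffleOp_wordSum, List.flatMap_singleton] at hrep
  rw [hsingle, hrep]
  exact ⟨foldl_shOp_wordSum as [w], rfl⟩
end

section
/- The signed random-to-random operator R2R_n^± and the random-to-random operator R2R_n are conjugate linear transformations of the space of injective words: R2R_n^± = T ∘ R2R_n ∘ T^{-1}, where T is the linear map multiplying each injective word w by the sign of the unique permutation sorting its letters into increasing order. -/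
open Finsupp

variable {A : Type} [DecidableEq A]

/-- The sign of an injective word `w` of length `n` on `Fin n`: the sign of the unique
permutation `σ` with `w_{σ 1} < w_{σ 2} < ⋯ < w_{σ n}`, equivalently (since the unique
increasing bijection `Fin n → Fin n` is the identity) the sign of the permutation
`i ↦ w i`.  (Junk value `1` for non-injective words.) -/
noncomputable def signWord (n : ℕ) (w : List (Fin n)) : ℂ :=
  if h : w.Nodup ∧ w.length = n then
    ((Equiv.Perm.sign (Equiv.ofBijective (fun i : Fin n => w.get (Fin.cast h.2.symm i))
      ((Finite.injective_iff_bijective).mp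
        ((List.nodup_iff_injective_get.mp h.1).comp (Fin.cast_injective h.2.symm)))) : ℤ) : ℂ)
  else 1

/-- The linear map `T : w ↦ sign(w) • w` on the span of injective words. -/
noncomputable def signTwist (n : ℕ) : (List (Fin n) →₀ ℂ) →ₗ[ℂ] (List (Fin n) →₀ ℂ) :=
  Finsupp.linearCombination ℂ (fun w => signWord n w • Finsupp.single w (1 : ℂ))

/-- The signed random-to-random operator on a single word: each move of a letter from
position `u` to position `v` is weighted by `(-1) ^ |v - u|`. -/
noncomputable def r2rpmWord (n : ℕ) (w : List (Fin n)) : List (Fin n) →₀ ℂ :=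
  ∑ i ∈ Finset.range w.length, ∑ j ∈ Finset.range w.length,
    ((-1 : ℂ) ^ (max i j - min i j)) • Finsupp.single (moveCard w i j) (1 : ℂ)

/-- The signed random-to-random operator `R2R_n^±`. -/
noncomputable def r2rpmOp (n : ℕ) : (List (Fin n) →₀ ℂ) →ₗ[ℂ] (List (Fin n) →₀ ℂ) :=
  Finsupp.linearCombination ℂ (r2rpmWord n)

/-!
Moving the letter at position `u` of `w` to position `v` composes `w` with the cycle
`(u u+1 … v)` (for `u ≤ v`) or with the inverse of `(v v+1 … u)` (for `v ≤ u`); either way the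
sign of the word changes by `(-1) ^ |v - u|`, which is exactly the weight of that move in
`R2R_n^±`. Hence `T` intertwines `R2R_n` and `R2R_n^±` term by term.
-/

namespace List

variable {α : Type*}

theorem getElem_eraseIdx_succAbove {l : List α} {n : ℕ} (hl : l.length = n + 1)
    (i : Fin (n + 1)) (k : Fin n) :
    (l.eraseIdx i)[(k : ℕ)]'(by rw [length_eraseIdx]; grind) = l[(i.succAbove k : ℕ)] := by
  rcases lt_or_ge k.castSucc i with h | h
  · simp only [Fin.succAbove_of_castSucc_lt _ _ h, Fin.val_castSucc]
    exact getElem_eraseIdx_of_lt _ h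
  · simp only [Fin.succAbove_of_le_castSucc _ _ h, Fin.val_succ]
    exact getElem_eraseIdx_of_ge _ h

theorem getElem_insertIdx_succAbove {l : List α} {n : ℕ} (hl : l.length = n) (x : α)
    (j : Fin (n + 1)) (k : Fin n) :
    (l.insertIdx j x)[(j.succAbove k : ℕ)]'(by rw [length_insertIdx]; grind) = l[(k : ℕ)] := by
  rcases lt_or_ge k.castSucc j with h | h
  · simp only [Fin.succAbove_of_castSucc_lt _ _ h, Fin.val_castSucc]
    exact getElem_insertIdx_of_lt h _
  · simp only [Fin.succAbove_of_le_castSucc _ _ h, Fin.val_succ]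
    exact getElem_insertIdx_of_gt (Nat.lt_succ_of_le h) _

end List

section MoveCard

variable {α : Type}

theorem moveCard_of_lt_length (w : List α) {i : ℕ} (hi : i < w.length) (j : ℕ) :
    moveCard w i j = (w.eraseIdx i).insertIdx j w[i] := by
  simp [moveCard, hi]

theorem length_moveCard (w : List α) {i j : ℕ} (hi : i < w.length) (hj : j < w.length) :
    (moveCard w i j).length = w.length := by
  rw [moveCard_of_lt_length w hi, List.length_insertIdx, List.length_eraseIdx]
  grind

theorem getElem_moveCard {w : List α} {n : ℕ} (hw : w.length = n + 1) {i j : Fin (n + 1)}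
    {σ : Equiv.Perm (Fin (n + 1))} (hσj : σ j = i) (hσ : σ ∘ j.succAbove = i.succAbove)
    (m : Fin (n + 1)) (hm : (m : ℕ) < (moveCard w i j).length) :
    (moveCard w i j)[(m : ℕ)] = w[(σ m : ℕ)] := by
  have hi : (i : ℕ) < w.length := by omega
  simp only [moveCard_of_lt_length w hi]
  rcases Fin.eq_self_or_eq_succAbove j m with rfl | ⟨k, rfl⟩
  · simp [hσj]
  · rw [List.getElem_insertIdx_succAbove (by rw [List.length_eraseIdx]; grind),
      List.getElem_eraseIdx_succAbove hw]
    simp only [← hσ, Function.comp_apply]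

end MoveCard

section Sign

variable {n : ℕ}

theorem signWord_eq_sign_mul {w w' : List (Fin n)} (hnd : w.Nodup) (hw : w.length = n)
    (hw' : w'.length = n) (σ : Equiv.Perm (Fin n)) (h : ∀ m : Fin n, w'[(m : ℕ)] = w[(σ m : ℕ)]) :
    signWord n w' = Equiv.Perm.sign σ * signWord n w := by
  have hnd' : w'.Nodup := by
    refine List.nodup_iff_injective_get.mpr fun a b hab => ?_
    have ha := h (a.cast hw')
    have hb := h (b.cast hw')
    simp only [List.get_eq_getElem, Fin.val_cast] at hab ha hb
    rw [ha, hb, hnd.getElem_inj_iff, Fin.val_inj, σ.apply_eq_iff_eq] at hab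
    exact Fin.cast_injective _ hab
  rw [signWord, dif_pos ⟨hnd', hw'⟩, signWord, dif_pos ⟨hnd, hw⟩, mul_comm, ← Int.cast_mul,
    ← Units.val_mul, ← Equiv.Perm.sign_mul]
  congr 3
  exact Equiv.ext fun m => by simpa using h m

theorem signWord_moveCard_eq_sign_mul {w : List (Fin (n + 1))} (hnd : w.Nodup)
    (hw : w.length = n + 1) {i j : Fin (n + 1)} {σ : Equiv.Perm (Fin (n + 1))} (hσj : σ j = i)
    (hσ : σ ∘ j.succAbove = i.succAbove) :
    signWord (n + 1) (moveCard w i j) = Equiv.Perm.sign σ * signWord (n + 1) w :=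
  signWord_eq_sign_mul hnd hw (by rw [length_moveCard w (by omega) (by omega), hw]) σ
    fun m => getElem_moveCard hw hσj hσ m _

theorem signWord_moveCard {w : List (Fin n)} (hnd : w.Nodup) (hw : w.length = n) {i j : ℕ}
    (hi : i < n) (hj : j < n) :
    signWord n (moveCard w i j) = (-1) ^ (max i j - min i j) * signWord n w := by
  obtain ⟨n, rfl⟩ : ∃ k, n = k + 1 := ⟨n - 1, by omega⟩
  obtain ⟨i, rfl⟩ : ∃ i' : Fin (n + 1), (i' : ℕ) = i := ⟨⟨i, hi⟩, rfl⟩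
  obtain ⟨j, rfl⟩ : ∃ j' : Fin (n + 1), (j' : ℕ) = j := ⟨⟨j, hj⟩, rfl⟩
  rcases le_total i j with hij | hij
  · rw [signWord_moveCard_eq_sign_mul hnd hw (Fin.cycleIcc_of_last hij)
      (Fin.cycleIcc_comp_succAbove i j hij), Fin.sign_cycleIcc_of_le hij,
      max_eq_right (Fin.le_def.mp hij), min_eq_left (Fin.le_def.mp hij)]
    push_cast
    rfl
  · have hσj : (Fin.cycleIcc j i)⁻¹ j = i :=
      Equiv.Perm.inv_eq_iff_eq.mpr (Fin.cycleIcc_of_last hij).symm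
    have hσ : ⇑(Fin.cycleIcc j i)⁻¹ ∘ j.succAbove = i.succAbove := by
      rw [← Fin.cycleIcc_comp_succAbove j i hij]
      ext
      simp
    rw [signWord_moveCard_eq_sign_mul hnd hw hσj hσ, Equiv.Perm.sign_inv,
      Fin.sign_cycleIcc_of_le hij, max_eq_left (Fin.le_def.mp hij), min_eq_right (Fin.le_def.mp hij)]
    push_cast
    rfl

end Sign

/-- `R2R_n^±` and `R2R_n` are conjugate via `T`:
`R2R_n^± = T ∘ R2R_n ∘ T⁻¹` on the span of injective words, equivalently
`R2R_n^± ∘ T = T ∘ R2R_n` there. -/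
theorem r2rpm_conj_r2r (n : ℕ) (w : List (Fin n)) (hnd : w.Nodup) (hw : w.length = n) :
    r2rpmOp n (signTwist n (Finsupp.single w (1 : ℂ))) =
      signTwist n (r2rOp (Finsupp.single w (1 : ℂ))) := by
  simp only [signTwist, r2rpmOp, r2rOp, linearCombination_single, one_smul, map_smul, r2rWord,
    r2rpmWord, map_sum, Finset.smul_sum]
  refine Finset.sum_congr rfl fun i hi => Finset.sum_congr rfl fun j hj => ?_
  rw [Finset.mem_range, hw] at hi hj
  rw [signWord_moveCard hnd hw hi hj, smul_smul, mul_comm]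
end
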